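/- Let P and Q be Borel probability measures on ℝ^p × ℝ^q with first marginals P_X and Q_X, and let ρ ∈ (0,1) and M = (1−ρ)P + ρQ. Suppose there is a Borel set A ⊆ ℝ^p with P_X(A) = 1 and Q_X(A) = 0 (the first marginals are mutually singular). Then the conditional (disintegration) kernel of M given the first coordinate agrees with the conditional kernel of P for P_X-almost every x, and agrees with the conditional kernel of Q for Q_X-almost every x. -/

import Mathlib

/-! The kernel equal to `P.condKernel` on `A` and to `Q.condKernel` off `A` disintegrates each
of `P`, `Q`, hence every positive combination of them, so by uniqueness of disintegrations it is
the conditional kernel of `M` almost everywhere for `M.fst`, whose null sets are those of both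
`P.fst` and `Q.fst`. -/

open MeasureTheory ProbabilityTheory
open scoped ENNReal

lemma MeasureTheory.Measure.fst_smul {α β : Type*} [MeasurableSpace α] [MeasurableSpace β]
    (c : ℝ≥0∞) (ρ : Measure (α × β)) : (c • ρ).fst = c • ρ.fst :=
  Measure.map_smul c ρ Prod.fst

namespace ProbabilityTheory

variable {α Ω : Type*} {mα : MeasurableSpace α} [MeasurableSpace Ω] [StandardBorelSpace Ω]
  [Nonempty Ω]

lemma condKernel_smul_ae_eq (μ : Measure (α × Ω)) [IsFiniteMeasure μ] {c : ℝ≥0∞}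
    [IsFiniteMeasure (c • μ)] (hc : c ≠ 0) :
    (c • μ).condKernel =ᵐ[μ.fst] μ.condKernel := by
  have hdisint : c • μ = (c • μ).fst ⊗ₘ μ.condKernel := by
    rw [Measure.fst_smul, Measure.compProd_smul_left, μ.disintegrate μ.condKernel]
  have hae := eq_condKernel_of_measure_eq_compProd μ.condKernel hdisint
  rw [Measure.fst_smul] at hae
  filter_upwards [(Measure.absolutelyContinuous_smul hc).ae_le hae] with x hx
  exact hx.symm

lemma condKernel_add_ae_eq_left (μ ν : Measure (α × Ω)) [IsFiniteMeasure μ] [IsFiniteMeasure ν]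
    (h : μ.fst ⟂ₘ ν.fst) :
    (μ + ν).condKernel =ᵐ[μ.fst] μ.condKernel := by
  classical
  set κ := Kernel.piecewise h.measurableSet_nullSet ν.condKernel μ.condKernel
  have hκμ : κ =ᵐ[μ.fst] μ.condKernel := by
    filter_upwards [measure_eq_zero_iff_ae_notMem.mp h.measure_nullSet] with x hx
    simp [κ, Kernel.piecewise_apply, hx]
  have hκν : κ =ᵐ[ν.fst] ν.condKernel := by
    filter_upwards [measure_eq_zero_iff_ae_notMem.mp h.measure_compl_nullSet] with x hx
    simp [κ, Kernel.piecewise_apply, Set.notMem_compl_iff.mp hx]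
  have hdisint : μ + ν = (μ + ν).fst ⊗ₘ κ := by
    rw [Measure.fst_add, Measure.compProd_add_left, Measure.compProd_congr hκμ,
      Measure.compProd_congr hκν, μ.disintegrate, ν.disintegrate]
  have hac : μ.fst ≪ (μ + ν).fst := by
    rw [Measure.fst_add]
    exact Measure.AbsolutelyContinuous.rfl.add_right ν.fst
  filter_upwards [hac.ae_le (eq_condKernel_of_measure_eq_compProd κ hdisint), hκμ]
    with x hκ hκμ
  rw [← hκ, hκμ]

lemma condKernel_smul_add_smul_ae_eq_left (μ ν : Measure (α × Ω)) [IsFiniteMeasure μ]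
    [IsFiniteMeasure ν] {a b : ℝ≥0∞} [IsFiniteMeasure (a • μ)] [IsFiniteMeasure (b • ν)]
    (ha : a ≠ 0) (h : μ.fst ⟂ₘ ν.fst) :
    (a • μ + b • ν).condKernel =ᵐ[μ.fst] μ.condKernel := by
  have hsing : (a • μ).fst ⟂ₘ (b • ν).fst := by
    rw [Measure.fst_smul, Measure.fst_smul]
    exact h.mono_ac Measure.smul_absolutelyContinuous Measure.smul_absolutelyContinuous
  have hmix := condKernel_add_ae_eq_left (a • μ) (b • ν) hsing
  rw [Measure.fst_smul] at hmix
  filter_upwards [(Measure.absolutelyContinuous_smul ha).ae_le hmix,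
    condKernel_smul_ae_eq μ ha] with x hmix hsmul
  rw [hmix, hsmul]

lemma condKernel_smul_add_smul_ae_eq_right (μ ν : Measure (α × Ω)) [IsFiniteMeasure μ]
    [IsFiniteMeasure ν] {a b : ℝ≥0∞} [IsFiniteMeasure (a • μ)] [IsFiniteMeasure (b • ν)]
    (hb : b ≠ 0) (h : μ.fst ⟂ₘ ν.fst) :
    (a • μ + b • ν).condKernel =ᵐ[ν.fst] ν.condKernel := by
  simpa only [add_comm (a • μ)] using condKernel_smul_add_smul_ae_eq_left ν μ hb h.symm

end ProbabilityTheory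

theorem mixture_condKernel {p q : ℕ}
    (P Q M : Measure (EuclideanSpace ℝ (Fin p) × EuclideanSpace ℝ (Fin q)))
    [IsProbabilityMeasure P] [IsProbabilityMeasure Q] [IsFiniteMeasure M]
    (ρ : ℝ) (hρ : ρ ∈ Set.Ioo (0:ℝ) 1)
    (hM : M = ENNReal.ofReal (1 - ρ) • P + ENNReal.ofReal ρ • Q)
    (A : Set (EuclideanSpace ℝ (Fin p))) (hA : MeasurableSet A)
    (hPA : P.fst A = 1) (hQA : Q.fst A = 0) :
    (∀ᵐ x ∂P.fst, M.condKernel x = P.condKernel x) ∧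
      (∀ᵐ x ∂Q.fst, M.condKernel x = Q.condKernel x) := by
  have ha : ENNReal.ofReal (1 - ρ) ≠ 0 := by simpa using hρ.2
  have hb : ENNReal.ofReal ρ ≠ 0 := by simpa using hρ.1
  have : IsFiniteMeasure (ENNReal.ofReal (1 - ρ) • P) := P.smul_finite ENNReal.ofReal_ne_top
  have : IsFiniteMeasure (ENNReal.ofReal ρ • Q) := Q.smul_finite ENNReal.ofReal_ne_top
  have hPQ : P.fst ⟂ₘ Q.fst :=
    ⟨Aᶜ, hA.compl, (prob_compl_eq_zero_iff hA).mpr hPA, by rwa [compl_compl]⟩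
  subst hM
  exact ⟨condKernel_smul_add_smul_ae_eq_left P Q ha hPQ,
    condKernel_smul_add_smul_ae_eq_right P Q hb hPQ⟩
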